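/- arXiv:1008.1237 — 4 statements merged into one kernel-verified Lean document; each statement's English description precedes it below -/
import Mathlib

section
/- For any smooth compactly supported function f on the d-dimensional hyperbolic space H^d (d ≥ 2), one has the uniform Poincaré inequality ∫_{H^d} |f|^2 dμ ≤ C_d ∫_{H^d} |∇f|^2 dμ, where ∇ is the Riemannian gradient and dμ the Riemannian measure; in fact one may take C_d = 4/(d-1)^2. -/
set_option synthInstance.maxHeartbeats 1000000
set_option maxHeartbeats 1000000
open MeasureTheory Real

namespace PoincareHyp

variable {d : ℕ}

local notation "E" => EuclideanSpace ℝ (Fin d)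

/-- the weight `(1+‖v‖²)^{-1/2}` -/
noncomputable def w (v : E) : ℝ := (1 + ‖v‖ ^ 2) ^ (-(1 : ℝ) / 2)

lemma q_pos (v : E) : (0:ℝ) < 1 + ‖v‖ ^ 2 := by positivity

lemma w_pos (v : E) : 0 < w v := rpow_pos_of_pos (q_pos v) _

lemma w_le_one (v : E) : w v ≤ 1 :=
  rpow_le_one_of_one_le_of_nonpos (by nlinarith [sq_nonneg ‖v‖]) (by norm_num)

lemma continuous_w : Continuous (w (d := d)) := by
  apply Continuous.rpow_const
  · exact continuous_const.add (continuous_norm.pow 2)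
  · exact fun v => Or.inl (q_pos v).ne'

lemma hasFDerivAt_q (v : E) :
    HasFDerivAt (fun v : E => 1 + ‖v‖ ^ 2) (2 • (innerSL ℝ v)) v :=
  ((hasStrictFDerivAt_norm_sq v).hasFDerivAt).const_add 1

lemma hasFDerivAt_w (v : E) :
    HasFDerivAt (w (d := d)) ((-(1 + ‖v‖ ^ 2) ^ (-(3 : ℝ) / 2)) • (innerSL ℝ v)) v := by
  have h1 : HasDerivAt (fun t : ℝ => t ^ (-(1:ℝ)/2))
      ((-(1:ℝ)/2) * (1 + ‖v‖ ^ 2) ^ ((-(1:ℝ)/2) - 1) ) (1 + ‖v‖ ^ 2) :=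
    Real.hasDerivAt_rpow_const (Or.inl (q_pos v).ne')
  have := h1.comp_hasFDerivAt v (hasFDerivAt_q v)
  refine this.congr_fderiv ?_
  ext u
  simp only [ContinuousLinearMap.coe_smul', Pi.smul_apply, ContinuousLinearMap.smul_apply,
    smul_eq_mul]
  have : ((-(1:ℝ)/2) - 1 : ℝ) = -(3:ℝ)/2 := by norm_num
  rw [this]
  ring

end PoincareHyp

namespace PoincareHyp

variable {d : ℕ}

local notation "E" => EuclideanSpace ℝ (Fin d)

lemma abs_coord_le (v : E) (i : Fin d) : |v i| ≤ ‖v‖ := by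
  rw [EuclideanSpace.norm_eq, ← Real.sqrt_sq_eq_abs]
  apply Real.sqrt_le_sqrt
  have := Finset.single_le_sum (f := fun j => ‖v j‖ ^ 2)
    (fun j _ => by positivity) (Finset.mem_univ i)
  simpa [Real.norm_eq_abs, sq_abs] using this

lemma norm_sq_eq (v : E) : ‖v‖ ^ 2 = ∑ i, v i ^ 2 := by
  rw [EuclideanSpace.norm_eq, Real.sq_sqrt (by positivity)]
  simp [Real.norm_eq_abs, sq_abs]

lemma q_mul_rpow (v : E) :
    (1 + ‖v‖ ^ 2) * (1 + ‖v‖ ^ 2) ^ (-(3:ℝ)/2) = w v := by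
  unfold w
  nth_rewrite 1 [← Real.rpow_one (1 + ‖v‖ ^ 2)]
  rw [← Real.rpow_add (q_pos v)]
  norm_num

noncomputable def phi (i : Fin d) (v : E) : ℝ := v i * w v

noncomputable def phi' (i : Fin d) (v : E) : EuclideanSpace ℝ (Fin d) →L[ℝ] ℝ :=
  v i • ((-(1 + ‖v‖ ^ 2) ^ (-(3:ℝ)/2)) • innerSL ℝ v) + w v • EuclideanSpace.proj i

lemma hasFDerivAt_phi (i : Fin d) (v : E) : HasFDerivAt (phi i) (phi' i v) v :=
  (EuclideanSpace.proj (𝕜 := ℝ) i).hasFDerivAt.mul (hasFDerivAt_w v)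

lemma norm_phi'_le (i : Fin d) (v : E) : ‖phi' i v‖ ≤ 2 := by
  have hq := q_pos v
  have h3 : (0:ℝ) < (1 + ‖v‖ ^ 2) ^ (-(3:ℝ)/2) := rpow_pos_of_pos hq _
  have hproj : ‖(EuclideanSpace.proj (𝕜 := ℝ) i : EuclideanSpace ℝ (Fin d) →L[ℝ] ℝ)‖ ≤ 1 := by
    apply ContinuousLinearMap.opNorm_le_bound _ zero_le_one
    intro u
    simpa [Real.norm_eq_abs] using abs_coord_le u i
  have A : ‖v i • ((-(1 + ‖v‖ ^ 2) ^ (-(3:ℝ)/2)) • innerSL ℝ v)‖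
      = |v i| * ((1 + ‖v‖ ^ 2) ^ (-(3:ℝ)/2) * ‖v‖) := by
    rw [norm_smul (v i) ((-(1 + ‖v‖ ^ 2) ^ (-(3:ℝ)/2)) • innerSL ℝ v),
      norm_smul (-(1 + ‖v‖ ^ 2) ^ (-(3:ℝ)/2)) (innerSL ℝ v), innerSL_apply_norm]
    simp only [Real.norm_eq_abs, abs_neg, abs_of_pos h3]
  have B : ‖w v • (EuclideanSpace.proj (𝕜 := ℝ) i)‖ ≤ w v := by
    rw [norm_smul (w v) (EuclideanSpace.proj (𝕜 := ℝ) i), Real.norm_eq_abs, abs_of_pos (w_pos v)]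
    simpa using mul_le_mul_of_nonneg_left hproj (w_pos v).le
  have C : |v i| * ((1 + ‖v‖ ^ 2) ^ (-(3:ℝ)/2) * ‖v‖)
      ≤ (1 + ‖v‖ ^ 2) * (1 + ‖v‖ ^ 2) ^ (-(3:ℝ)/2) := by
    have h1 : |v i| * ‖v‖ ≤ 1 + ‖v‖ ^ 2 := by
      nlinarith [abs_coord_le v i, abs_nonneg (v i), norm_nonneg v]
    calc |v i| * ((1 + ‖v‖ ^ 2) ^ (-(3:ℝ)/2) * ‖v‖)
        = (|v i| * ‖v‖) * (1 + ‖v‖ ^ 2) ^ (-(3:ℝ)/2) := by ring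
      _ ≤ (1 + ‖v‖ ^ 2) * (1 + ‖v‖ ^ 2) ^ (-(3:ℝ)/2) :=
          mul_le_mul_of_nonneg_right h1 h3.le
  calc ‖phi' i v‖ ≤ ‖v i • ((-(1 + ‖v‖ ^ 2) ^ (-(3:ℝ)/2)) • innerSL ℝ v)‖
        + ‖w v • (EuclideanSpace.proj (𝕜 := ℝ) i)‖ := norm_add_le _ _
    _ ≤ (1 + ‖v‖ ^ 2) * (1 + ‖v‖ ^ 2) ^ (-(3:ℝ)/2) + w v := by
        rw [A]; exact add_le_add C B
    _ ≤ 2 := by rw [q_mul_rpow]; have := w_le_one v; linarith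

lemma lipschitz_phi (i : Fin d) : LipschitzWith 2 (phi (d := d) i) := by
  apply lipschitzWith_of_nnnorm_fderiv_le
    (fun v => (hasFDerivAt_phi i v).differentiableAt)
  intro v
  rw [(hasFDerivAt_phi i v).fderiv]
  exact_mod_cast norm_phi'_le i v

lemma lineDeriv_phi (i : Fin d) (v : E) :
    lineDeriv ℝ (phi i) v (EuclideanSpace.single i 1)
      = w v - v i ^ 2 * (1 + ‖v‖ ^ 2) ^ (-(3:ℝ)/2) := by
  rw [((hasFDerivAt_phi i v).hasLineDerivAt _).lineDeriv]
  simp only [phi', ContinuousLinearMap.add_apply, ContinuousLinearMap.smul_apply,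
    innerSL_apply_apply, smul_eq_mul]
  rw [EuclideanSpace.inner_single_right]
  simp [EuclideanSpace.proj, EuclideanSpace.single_apply]
  ring


lemma young (x y e : ℝ) (he : 0 < e) : -(2*x*y) ≤ e*x^2 + e⁻¹*y^2 := by
  have h : 0 ≤ e⁻¹ * (e*x + y)^2 := by positivity
  have hc : e * e⁻¹ = 1 := mul_inv_cancel₀ he.ne'
  nlinarith [h, hc]

section main

variable {F : EuclideanSpace ℝ (Fin d) → ℝ}
  (hF : ContDiff ℝ (⊤ : ℕ∞) F) (hsupp : HasCompactSupport F)

/-- partial derivative of `F` -/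
noncomputable def D (F : EuclideanSpace ℝ (Fin d) → ℝ) (i : Fin d) (v : E) : ℝ :=
  fderiv ℝ F v (EuclideanSpace.single i 1)

/-- radial derivative `v ⬝ ∇F` -/
noncomputable def T (F : EuclideanSpace ℝ (Fin d) → ℝ) (v : E) : ℝ :=
  ∑ i, v i * D F i v

include hF in
lemma cont_D (i : Fin d) : Continuous (D F i) :=
  (hF.continuous_fderiv (by simp)).clm_apply continuous_const

include hF in
lemma cont_T : Continuous (T F) := by
  apply continuous_finset_sum
  intro i _
  exact ((EuclideanSpace.proj (𝕜 := ℝ) i).continuous).mul (cont_D hF i)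

include hsupp in
lemma integrable_aux {g : EuclideanSpace ℝ (Fin d) → ℝ} (hg : Continuous g)
    (h0 : ∀ v, v ∉ tsupport F → g v = 0) : Integrable g := by
  apply hg.integrable_of_hasCompactSupport
  apply hsupp.mono'
  intro v hv
  by_contra h
  exact hv (h0 v h)

lemma F_zero {v : E} (h : v ∉ tsupport F) : F v = 0 := image_eq_zero_of_notMem_tsupport h

lemma D_zero (i : Fin d) {v : E} (h : v ∉ tsupport F) : D F i v = 0 := by
  unfold D
  rw [fderiv_of_notMem_tsupport ℝ h]
  rfl

lemma T_zero {v : E} (h : v ∉ tsupport F) : T F v = 0 := by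
  unfold T
  simp [D_zero _ h]

include hF in
lemma hasFDerivAt_sq (v : E) :
    HasFDerivAt (fun v => F v ^ 2) ((2 * F v) • fderiv ℝ F v) v := by
  have hd : HasFDerivAt F (fderiv ℝ F v) v := (hF.differentiable (by simp) v).hasFDerivAt
  have h := hd.mul hd
  have e1 : (fun v => F v ^ 2) = fun v => F v * F v := by funext u; ring
  have e2 : (2 * F v) • fderiv ℝ F v
      = F v • fderiv ℝ F v + F v • fderiv ℝ F v := by
    rw [two_mul, add_smul]
  rw [e1, e2]
  exact h

include hF in
lemma lineDeriv_sq (v : E) (i : Fin d) :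
    lineDeriv ℝ (fun v => F v ^ 2) v (-(EuclideanSpace.single i 1))
      = -(2 * F v * D F i v) := by
  rw [(((hasFDerivAt_sq hF v)).hasLineDerivAt _).lineDeriv]
  simp only [map_neg, ContinuousLinearMap.coe_smul', Pi.smul_apply, smul_eq_mul, D]
  try ring

include hF hsupp in
lemma ibp (i : Fin d) :
    ∫ v : EuclideanSpace ℝ (Fin d),
        (w v - v i ^ 2 * (1 + ‖v‖ ^ 2) ^ (-(3:ℝ)/2)) * F v ^ 2
      = ∫ v : EuclideanSpace ℝ (Fin d), -(2 * F v * D F i v) * (v i * w v) := by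
  have hGsupp : HasCompactSupport (fun v : EuclideanSpace ℝ (Fin d) => F v ^ 2) := by
    apply hsupp.mono
    intro v hv hF0
    exact hv (by simp [hF0])
  obtain ⟨C, hC⟩ := ContDiff.lipschitzWith_of_hasCompactSupport hGsupp (hF.pow 2)
    (by simp)
  have h := LipschitzWith.integral_lineDeriv_mul_eq (μ := volume)
    (lipschitz_phi i) hC hGsupp (EuclideanSpace.single i 1)
  simp only [lineDeriv_phi] at h
  calc ∫ v : EuclideanSpace ℝ (Fin d),
        (w v - v i ^ 2 * (1 + ‖v‖ ^ 2) ^ (-(3:ℝ)/2)) * F v ^ 2 = _ := h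
    _ = ∫ v : EuclideanSpace ℝ (Fin d), -(2 * F v * D F i v) * (v i * w v) := by
        apply integral_congr_ae
        filter_upwards with v
        rw [lineDeriv_sq hF v i]
        rfl


lemma continuous_q32 : Continuous (fun v : E => (1 + ‖v‖ ^ 2) ^ (-(3:ℝ)/2)) := by
  apply Continuous.rpow_const
  · exact continuous_const.add (continuous_norm.pow 2)
  · exact fun v => Or.inl (q_pos v).ne'

omit hF hsupp in
lemma Q_eq (v : E) :
    (∑ i, ∑ j, ((if i = j then (1:ℝ) else 0) + v i * v j) * D F i v * D F j v)
      = (∑ i, (D F i v) ^ 2) + (T F v) ^ 2 := by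
  calc (∑ i, ∑ j, ((if i = j then (1:ℝ) else 0) + v i * v j) * D F i v * D F j v)
      = ∑ i, ∑ j, ((if i = j then D F i v * D F j v else 0)
          + (v i * D F i v) * (v j * D F j v)) := by
        apply Finset.sum_congr rfl; intro i _
        apply Finset.sum_congr rfl; intro j _
        by_cases hij : i = j <;> simp [hij] <;> ring
    _ = (∑ i, (D F i v) ^ 2) + (T F v) ^ 2 := by
        simp only [Finset.sum_add_distrib]
        congr 1
        · apply Finset.sum_congr rfl; intro i _
          rw [Finset.sum_ite_eq]
          simp [sq]
        · rw [sq]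
          unfold T
          rw [Finset.sum_mul]
          apply Finset.sum_congr rfl; intro i _
          rw [Finset.mul_sum]

include hF hsupp in
lemma divergence_identity :
    ∫ v : EuclideanSpace ℝ (Fin d),
        ((d:ℝ) * w v - ‖v‖ ^ 2 * (1 + ‖v‖ ^ 2) ^ (-(3:ℝ)/2)) * F v ^ 2
      = ∫ v : EuclideanSpace ℝ (Fin d), -(2 * F v * T F v) * w v := by
  have cF := hF.continuous
  have h1 : ∀ i : Fin d, Integrable
      (fun v : EuclideanSpace ℝ (Fin d) =>
        (w v - v i ^ 2 * (1 + ‖v‖ ^ 2) ^ (-(3:ℝ)/2)) * F v ^ 2) := by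
    intro i
    apply integrable_aux hsupp
    · exact (continuous_w.sub ((((EuclideanSpace.proj (𝕜 := ℝ) i).continuous).pow 2).mul
        continuous_q32)).mul (cF.pow 2)
    · intro v h; simp [F_zero h]
  have h2 : ∀ i : Fin d, Integrable
      (fun v : EuclideanSpace ℝ (Fin d) =>
        -(2 * F v * D F i v) * (v i * w v)) := by
    intro i
    apply integrable_aux hsupp
    · exact (((continuous_const.mul cF).mul (cont_D hF i)).neg).mul
        (((EuclideanSpace.proj (𝕜 := ℝ) i).continuous).mul continuous_w)
    · intro v h; simp [F_zero h]
  calc ∫ v : EuclideanSpace ℝ (Fin d),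
        ((d:ℝ) * w v - ‖v‖ ^ 2 * (1 + ‖v‖ ^ 2) ^ (-(3:ℝ)/2)) * F v ^ 2
      = ∫ v : EuclideanSpace ℝ (Fin d), ∑ i : Fin d,
          (w v - v i ^ 2 * (1 + ‖v‖ ^ 2) ^ (-(3:ℝ)/2)) * F v ^ 2 := by
        apply integral_congr_ae
        filter_upwards with v
        rw [← Finset.sum_mul]
        congr 1
        rw [Finset.sum_sub_distrib, Finset.sum_const, Finset.card_univ, Fintype.card_fin,
          nsmul_eq_mul, ← Finset.sum_mul, ← norm_sq_eq]
    _ = ∑ i : Fin d, ∫ v : EuclideanSpace ℝ (Fin d),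
          (w v - v i ^ 2 * (1 + ‖v‖ ^ 2) ^ (-(3:ℝ)/2)) * F v ^ 2 :=
        integral_finset_sum _ (fun i _ => h1 i)
    _ = ∑ i : Fin d, ∫ v : EuclideanSpace ℝ (Fin d),
          -(2 * F v * D F i v) * (v i * w v) :=
        Finset.sum_congr rfl (fun i _ => ibp hF hsupp i)
    _ = ∫ v : EuclideanSpace ℝ (Fin d), ∑ i : Fin d,
          -(2 * F v * D F i v) * (v i * w v) :=
        (integral_finset_sum _ (fun i _ => h2 i)).symm
    _ = ∫ v : EuclideanSpace ℝ (Fin d), -(2 * F v * T F v) * w v := by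
        apply integral_congr_ae
        filter_upwards with v
        calc ∑ i : Fin d, -(2 * F v * D F i v) * (v i * w v)
            = ∑ i : Fin d, (v i * D F i v) * (-(2 * F v) * w v) := by
              apply Finset.sum_congr rfl; intros; ring
          _ = (∑ i : Fin d, v i * D F i v) * (-(2 * F v) * w v) :=
              (Finset.sum_mul _ _ _).symm
          _ = -(2 * F v * T F v) * w v := by unfold T; ring

include hF hsupp in
theorem main (hd : 2 ≤ d) :
    ∫ v : EuclideanSpace ℝ (Fin d), F v ^ 2 * w v
      ≤ (4 / ((d : ℝ) - 1) ^ 2) *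
        ∫ v : EuclideanSpace ℝ (Fin d),
          (∑ i : Fin d, ∑ j : Fin d,
            ((if i = j then (1 : ℝ) else 0) + v i * v j) * D F i v * D F j v) * w v := by
  have hd1 : (1:ℝ) ≤ (d:ℝ) - 1 := by
    have : (2:ℝ) ≤ (d:ℝ) := by exact_mod_cast hd
    linarith
  have hdpos : (0:ℝ) < (d:ℝ) - 1 := by linarith
  set ε : ℝ := ((d:ℝ) - 1)/2 with hε
  have hεpos : 0 < ε := by rw [hε]; positivity
  have cF := hF.continuous
  have cT := cont_T hF
  -- integrability
  have iA : Integrable (fun v : EuclideanSpace ℝ (Fin d) => F v ^ 2 * w v) := by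
    apply integrable_aux hsupp ((cF.pow 2).mul continuous_w)
    intro v h; simp [F_zero h]
  have iT2 : Integrable (fun v : EuclideanSpace ℝ (Fin d) => (T F v) ^ 2 * w v) := by
    apply integrable_aux hsupp ((cT.pow 2).mul continuous_w)
    intro v h; simp [T_zero h]
  have iSum : Integrable (fun v : EuclideanSpace ℝ (Fin d) =>
      (∑ i, (D F i v) ^ 2) * w v) := by
    apply integrable_aux hsupp
      ((continuous_finset_sum _ fun i _ => (cont_D hF i).pow 2).mul continuous_w)
    intro v h; simp [D_zero _ h]
  have iQ : Integrable (fun v : EuclideanSpace ℝ (Fin d) =>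
      (∑ i : Fin d, ∑ j : Fin d,
        ((if i = j then (1 : ℝ) else 0) + v i * v j) * D F i v * D F j v) * w v) := by
    apply integrable_aux hsupp
    · apply Continuous.mul _ continuous_w
      apply continuous_finset_sum; intro i _
      apply continuous_finset_sum; intro j _
      exact ((continuous_const.add (((EuclideanSpace.proj (𝕜 := ℝ) i).continuous).mul
        ((EuclideanSpace.proj (𝕜 := ℝ) j).continuous))).mul (cont_D hF i)).mul (cont_D hF j)
    · intro v h; simp [D_zero _ h]
  have iL : Integrable (fun v : EuclideanSpace ℝ (Fin d) =>
      ((d:ℝ) * w v - ‖v‖ ^ 2 * (1 + ‖v‖ ^ 2) ^ (-(3:ℝ)/2)) * F v ^ 2) := by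
    apply integrable_aux hsupp
      (((continuous_const.mul continuous_w).sub
        ((continuous_norm.pow 2).mul continuous_q32)).mul (cF.pow 2))
    intro v h; simp [F_zero h]
  have iR : Integrable (fun v : EuclideanSpace ℝ (Fin d) =>
      -(2 * F v * T F v) * w v) := by
    apply integrable_aux hsupp
      ((((continuous_const.mul cF).mul cT).neg).mul continuous_w)
    intro v h; simp [F_zero h]
  -- step 1 : (d-1) ∫ F² w ≤ ∫ (d w - |v|² q^{-3/2}) F²
  have step1 : ((d:ℝ)-1) * ∫ v : EuclideanSpace ℝ (Fin d), F v ^ 2 * w v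
      ≤ ∫ v : EuclideanSpace ℝ (Fin d),
          ((d:ℝ) * w v - ‖v‖ ^ 2 * (1 + ‖v‖ ^ 2) ^ (-(3:ℝ)/2)) * F v ^ 2 := by
    rw [← integral_const_mul]
    apply integral_mono (iA.const_mul _) iL
    intro v
    have hq32 : (0:ℝ) < (1 + ‖v‖ ^ 2) ^ (-(3:ℝ)/2) := rpow_pos_of_pos (q_pos v) _
    have h1 : ‖v‖ ^ 2 * (1 + ‖v‖ ^ 2) ^ (-(3:ℝ)/2) ≤ w v := by
      rw [← q_mul_rpow v]
      nlinarith [hq32]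
    have h2 := mul_le_mul_of_nonneg_left h1 (sq_nonneg (F v))
    simp only
    nlinarith [h2]
  -- step 3 : ∫ -(2 F T) w ≤ ε ∫F²w + ε⁻¹ ∫T²w
  have step3 : ∫ v : EuclideanSpace ℝ (Fin d), -(2 * F v * T F v) * w v
      ≤ ε * (∫ v : EuclideanSpace ℝ (Fin d), F v ^ 2 * w v)
        + ε⁻¹ * (∫ v : EuclideanSpace ℝ (Fin d), (T F v) ^ 2 * w v) := by
    have key : ∫ v : EuclideanSpace ℝ (Fin d), -(2 * F v * T F v) * w v
        ≤ ∫ v : EuclideanSpace ℝ (Fin d),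
            (ε * (F v ^ 2 * w v) + ε⁻¹ * ((T F v) ^ 2 * w v)) := by
      apply integral_mono iR ((iA.const_mul ε).add (iT2.const_mul ε⁻¹))
      intro v
      simp only
      calc -(2 * F v * T F v) * w v
          ≤ (ε * F v ^ 2 + ε⁻¹ * (T F v) ^ 2) * w v :=
            mul_le_mul_of_nonneg_right (young (F v) (T F v) ε hεpos) (w_pos v).le
        _ = ε * (F v ^ 2 * w v) + ε⁻¹ * ((T F v) ^ 2 * w v) := by ring
    rwa [integral_add (iA.const_mul ε) (iT2.const_mul ε⁻¹),
      integral_const_mul, integral_const_mul] at key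
  have hAB : ((d:ℝ)-1) * ∫ v : EuclideanSpace ℝ (Fin d), F v ^ 2 * w v
      ≤ ε * (∫ v : EuclideanSpace ℝ (Fin d), F v ^ 2 * w v)
        + ε⁻¹ * (∫ v : EuclideanSpace ℝ (Fin d), (T F v) ^ 2 * w v) := by
    calc ((d:ℝ)-1) * ∫ v : EuclideanSpace ℝ (Fin d), F v ^ 2 * w v
        ≤ ∫ v : EuclideanSpace ℝ (Fin d),
            ((d:ℝ) * w v - ‖v‖ ^ 2 * (1 + ‖v‖ ^ 2) ^ (-(3:ℝ)/2)) * F v ^ 2 := step1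
      _ = ∫ v : EuclideanSpace ℝ (Fin d), -(2 * F v * T F v) * w v :=
          divergence_identity hF hsupp
      _ ≤ _ := step3
  -- comparison of T² with the full quadratic form
  have hB'B : (∫ v : EuclideanSpace ℝ (Fin d), (T F v) ^ 2 * w v)
      ≤ ∫ v : EuclideanSpace ℝ (Fin d),
          (∑ i : Fin d, ∑ j : Fin d,
            ((if i = j then (1 : ℝ) else 0) + v i * v j) * D F i v * D F j v) * w v := by
    have hsplit : ∫ v : EuclideanSpace ℝ (Fin d),
        (∑ i : Fin d, ∑ j : Fin d,
          ((if i = j then (1 : ℝ) else 0) + v i * v j) * D F i v * D F j v) * w v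
        = ∫ v : EuclideanSpace ℝ (Fin d),
            ((∑ i, (D F i v) ^ 2) * w v + (T F v) ^ 2 * w v) := by
      apply integral_congr_ae
      filter_upwards with v
      rw [Q_eq (F := F) v]
      ring
    rw [hsplit, integral_add iSum iT2]
    have hnn : 0 ≤ ∫ v : EuclideanSpace ℝ (Fin d), (∑ i, (D F i v) ^ 2) * w v := by
      apply integral_nonneg
      intro v
      have : (0:ℝ) ≤ ∑ i, (D F i v) ^ 2 := Finset.sum_nonneg fun i _ => sq_nonneg _
      exact mul_nonneg this (w_pos v).le
    linarith
  -- final arithmetic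
  have hinv : ε⁻¹ = 2/((d:ℝ)-1) := by rw [hε, inv_div]
  have h4 : ((d:ℝ)-1)/2 * (∫ v : EuclideanSpace ℝ (Fin d), F v ^ 2 * w v)
      ≤ 2/((d:ℝ)-1) * (∫ v : EuclideanSpace ℝ (Fin d), (T F v) ^ 2 * w v) := by
    rw [hε] at hAB
    rw [hinv] at hAB
    linarith
  have h5 := mul_le_mul_of_nonneg_left h4 (by positivity : (0:ℝ) ≤ 2/((d:ℝ)-1))
  have hfin : (∫ v : EuclideanSpace ℝ (Fin d), F v ^ 2 * w v)
      ≤ 4/((d:ℝ)-1)^2 * ∫ v : EuclideanSpace ℝ (Fin d), (T F v) ^ 2 * w v := by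
    calc (∫ v : EuclideanSpace ℝ (Fin d), F v ^ 2 * w v)
        = 2/((d:ℝ)-1) * (((d:ℝ)-1)/2 * ∫ v : EuclideanSpace ℝ (Fin d), F v ^ 2 * w v) := by
          field_simp
      _ ≤ 2/((d:ℝ)-1) * (2/((d:ℝ)-1) * ∫ v : EuclideanSpace ℝ (Fin d), (T F v) ^ 2 * w v) := h5
      _ = 4/((d:ℝ)-1)^2 * ∫ v : EuclideanSpace ℝ (Fin d), (T F v) ^ 2 * w v := by
          rw [← mul_assoc]
          congr 1
          field_simp
          ring
  exact hfin.trans (mul_le_mul_of_nonneg_left hB'B (by positivity))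

end main

end PoincareHyp

/-- Uniform Poincaré inequality on hyperbolic space `H^d`, expressed in the global
chart `Ψ_I : ℝ^d → H^d`: the Riemannian measure is `(1+|v|^2)^{-1/2} dv`, and the
squared Riemannian gradient is `Σ_{ij} (δ_{ij} + v_i v_j) ∂_i F ∂_j F` where
`F = f ∘ Ψ_I`.  One may take `C_d = 4/(d-1)^2`. -/
theorem stmt0 (d : ℕ) (hd : 2 ≤ d) (F : EuclideanSpace ℝ (Fin d) → ℝ)
    (hF : ContDiff ℝ (⊤ : ℕ∞) F) (hsupp : HasCompactSupport F) :
    ∫ v : EuclideanSpace ℝ (Fin d), (F v) ^ 2 * (1 + ‖v‖ ^ 2) ^ (-(1 : ℝ) / 2)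
      ≤ (4 / ((d : ℝ) - 1) ^ 2) *
        ∫ v : EuclideanSpace ℝ (Fin d),
          (∑ i : Fin d, ∑ j : Fin d,
            ((if i = j then (1 : ℝ) else 0) + v i * v j) *
              (fderiv ℝ F v (EuclideanSpace.single i 1)) *
              (fderiv ℝ F v (EuclideanSpace.single j 1))) *
            (1 + ‖v‖ ^ 2) ^ (-(1 : ℝ) / 2) := by
  have h := PoincareHyp.main hF hsupp hd
  simpa only [PoincareHyp.w, PoincareHyp.D] using h
end

section
/- Let P_N(r) be a radial kernel on H^3 satisfying |P_N(r)| ≤ C N^3 (1+Nr)^{-5} e^{-4r} for all r ≥ 0 and N ≥ 1. Then for any R ≥ 0, N ≥ 1 and p ∈ [1,2], the quantity A_{N,R,p} := ( ∫_{r ≥ R/N} |P_N(r)|^p (sinh r)^2 dr )^{1/p} satisfies A_{N,R,p} ≤ C' N^{3−3/p} (1+R)^{-1}, with C' depending only on C and p. -/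
/-!
Since `sinh r ≤ r e^r ≤ (1 + N r) e^r / N` and `p ≥ 1/2` makes `e^{-4pr} e^{2r} ≤ 1`, the
integrand is at most `|C|^p N^{3p-2} (1 + N r)^{2-5p}`. Its integral over `[R/N, ∞)` is
`|C|^p N^{3p-3} (1 + R)^{3-5p} / (5p - 3) ≤ |C|^p N^{3p-3} (1 + R)^{-p} / (5p - 3)`, and taking
`p`-th roots gives the bound with `C' = (|C|^p / (5p - 3))^{1/p}`.
-/

open MeasureTheory Real Filter
open Set Topology

lemma sinh_le_mul_exp (x : ℝ) : sinh x ≤ x * exp x := by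
  -- `sinh x = e^x (1 - e^{-2x}) / 2` and `1 - e^{-2x} ≤ 2x`
  have hexp : -(2 * x) + 1 ≤ exp (-(2 * x)) := add_one_le_exp _
  have hprod : exp (-(2 * x)) * exp x = exp (-x) := by rw [← exp_add]; ring_nf
  rw [sinh_eq]
  nlinarith [exp_pos x, exp_pos (-(2 * x))]

lemma sinh_sq_le_one_add_mul_sq_mul_exp {N x : ℝ} (hN : 0 < N) (hx : 0 ≤ x) :
    sinh x ^ 2 ≤ (1 + N * x) ^ 2 / N ^ 2 * exp (2 * x) := by
  have hxN : x ≤ (1 + N * x) / N := by rw [le_div_iff₀ hN]; linarith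
  calc sinh x ^ 2 ≤ ((1 + N * x) / N * exp x) ^ 2 := by
        gcongr
        exact (sinh_le_mul_exp x).trans (by gcongr)
    _ = _ := by rw [mul_pow, div_pow, ← exp_nat_mul]; norm_num

lemma abs_rpow_mul_sinh_sq_le {C N p x y : ℝ} (hN : 0 < N) (hx : 0 ≤ x) (hp : 1 / 2 ≤ p)
    (hy : |y| ≤ C * N ^ 3 * ((1 + N * x) ^ 5)⁻¹ * exp (-4 * x)) :
    |y| ^ p * sinh x ^ 2 ≤ |C| ^ p * N ^ (3 * p - 2) * (1 + N * x) ^ (2 - 5 * p) := by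
  set u := 1 + N * x
  have hu : 0 < u := by positivity
  have hy' : |y| ^ p ≤ |C| ^ p * N ^ (3 * p) * (u ^ (5 * p))⁻¹ * exp (-4 * x * p) := by
    calc |y| ^ p ≤ (|C| * N ^ 3 * (u ^ 5)⁻¹ * exp (-4 * x)) ^ p := by
          gcongr; exact hy.trans (by gcongr; exact le_abs_self C)
      _ = _ := by
        rw [mul_rpow (by positivity) (by positivity), mul_rpow (by positivity) (by positivity),
          mul_rpow (by positivity) (by positivity), inv_rpow (by positivity),
          ← rpow_natCast, ← rpow_natCast, ← rpow_mul hN.le, ← rpow_mul hu.le, ← exp_mul]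
        norm_num
  calc |y| ^ p * sinh x ^ 2
      ≤ (|C| ^ p * N ^ (3 * p) * (u ^ (5 * p))⁻¹ * exp (-4 * x * p))
          * (u ^ 2 / N ^ 2 * exp (2 * x)) := by
        gcongr
        exact sinh_sq_le_one_add_mul_sq_mul_exp hN hx
    _ = |C| ^ p * N ^ (3 * p - 2) * u ^ (2 - 5 * p) * exp ((2 - 4 * p) * x) := by
        rw [rpow_sub hN, rpow_sub hu, rpow_two, rpow_two,
          show (2 - 4 * p) * x = -4 * x * p + 2 * x by ring, exp_add]
        ring
    _ ≤ |C| ^ p * N ^ (3 * p - 2) * u ^ (2 - 5 * p) :=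
        mul_le_of_le_one_right (by positivity) (exp_le_one_iff.2 (by nlinarith))

section OneAddMulRpow

variable {N a s : ℝ}

lemma one_add_mul_pos (hN : 0 < N) (ha : 0 < 1 + N * a) {x : ℝ} (hx : a ≤ x) :
    0 < 1 + N * x := by
  nlinarith

lemma hasDerivAt_one_add_mul_rpow_div (hN : 0 < N) (hs : s ≠ -1) {x : ℝ} (hx : 0 < 1 + N * x) :
    HasDerivAt (fun t ↦ (1 + N * t) ^ (s + 1) / ((s + 1) * N)) ((1 + N * x) ^ s) x := by
  have hlin : HasDerivAt (fun t : ℝ ↦ 1 + N * t) N x := by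
    simpa using ((hasDerivAt_id x).const_mul N).const_add 1
  have hs' : s + 1 ≠ 0 := fun h ↦ hs (by linarith)
  refine (((hasDerivAt_rpow_const (Or.inl hx.ne')).comp x hlin).div_const _).congr_deriv ?_
  rw [add_sub_cancel_right]
  field_simp

lemma tendsto_one_add_mul_rpow_div_atTop (hN : 0 < N) (hs : s < -1) :
    Tendsto (fun t ↦ (1 + N * t) ^ (s + 1) / ((s + 1) * N)) atTop (𝓝 0) := by
  have hlin : Tendsto (fun t ↦ 1 + N * t) atTop atTop :=
    tendsto_atTop_add_const_left _ 1 (tendsto_id.const_mul_atTop hN)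
  simpa using ((tendsto_rpow_neg_atTop (by linarith : 0 < -(s + 1))).comp hlin).div_const
    ((s + 1) * N)

lemma integrableOn_Ioi_one_add_mul_rpow (hN : 0 < N) (ha : 0 < 1 + N * a) (hs : s < -1) :
    IntegrableOn (fun x ↦ (1 + N * x) ^ s) (Ioi a) :=
  integrableOn_Ioi_deriv_of_nonneg'
    (fun x hx ↦ hasDerivAt_one_add_mul_rpow_div hN (by linarith) (one_add_mul_pos hN ha hx))
    (fun x hx ↦ (rpow_pos_of_pos (one_add_mul_pos hN ha hx.le) s).le)
    (tendsto_one_add_mul_rpow_div_atTop hN hs)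

lemma integral_Ioi_one_add_mul_rpow (hN : 0 < N) (ha : 0 < 1 + N * a) (hs : s < -1) :
    ∫ x in Ioi a, (1 + N * x) ^ s = -(1 + N * a) ^ (s + 1) / ((s + 1) * N) := by
  rw [integral_Ioi_of_hasDerivAt_of_tendsto'
    (fun x hx ↦ hasDerivAt_one_add_mul_rpow_div hN (by linarith) (one_add_mul_pos hN ha hx))
    (integrableOn_Ioi_one_add_mul_rpow hN ha hs) (tendsto_one_add_mul_rpow_div_atTop hN hs),
    zero_sub, neg_div]

end OneAddMulRpow

lemma setIntegral_Ici_abs_rpow_mul_sinh_sq_le {C N R p : ℝ} {f : ℝ → ℝ} (hN : 0 < N)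
    (hR : 0 ≤ R) (hp : 3 / 4 ≤ p)
    (hf : ∀ r, 0 ≤ r → |f r| ≤ C * N ^ 3 * ((1 + N * r) ^ 5)⁻¹ * exp (-4 * r)) :
    ∫ r in Ici (R / N), |f r| ^ p * sinh r ^ 2
      ≤ |C| ^ p / (5 * p - 3) * N ^ (3 * p - 3) * (1 + R) ^ (-p) := by
  have ha : 0 < 1 + N * (R / N) := by positivity
  have hNa : 1 + N * (R / N) = 1 + R := by field_simp
  have hs : 2 - 5 * p < -1 := by linarith
  calc ∫ r in Ici (R / N), |f r| ^ p * sinh r ^ 2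
      = ∫ r in Ioi (R / N), |f r| ^ p * sinh r ^ 2 := integral_Ici_eq_integral_Ioi
    _ ≤ ∫ r in Ioi (R / N), |C| ^ p * N ^ (3 * p - 2) * (1 + N * r) ^ (2 - 5 * p) := by
        refine integral_mono_of_nonneg (.of_forall fun r ↦ by positivity)
          ((integrableOn_Ioi_one_add_mul_rpow hN ha hs).const_mul _) ?_
        filter_upwards [ae_restrict_mem measurableSet_Ioi] with r hr
        have hr0 : 0 ≤ r := (div_nonneg hR hN.le).trans hr.le
        exact abs_rpow_mul_sinh_sq_le hN hr0 (by linarith) (hf r hr0)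
    _ = |C| ^ p / (5 * p - 3) * (N ^ (3 * p - 2) / N) * (1 + R) ^ (3 - 5 * p) := by
        rw [integral_const_mul, integral_Ioi_one_add_mul_rpow hN ha hs, hNa,
          show 2 - 5 * p + 1 = 3 - 5 * p by ring]
        rw [← neg_div_neg_eq, neg_neg, ← neg_mul, neg_sub, ← div_div]
        ring
    _ ≤ |C| ^ p / (5 * p - 3) * N ^ (3 * p - 3) * (1 + R) ^ (-p) := by
        rw [← rpow_sub_one hN.ne', sub_sub, show (2 : ℝ) + 1 = 3 by norm_num]
        refine mul_le_mul_of_nonneg_left (rpow_le_rpow_of_exponent_le (by linarith) (by linarith))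
          (mul_nonneg (div_nonneg (by positivity) (by linarith)) (by positivity))

lemma rpow_one_div_le_of_le_mul_rpow {I M N T p : ℝ} (hI : 0 ≤ I) (hM : 0 ≤ M) (hN : 0 ≤ N)
    (hT : 0 < T) (hp : 0 < p) (h : I ≤ M * N ^ (3 * p - 3) * T ^ (-p)) :
    I ^ (1 / p) ≤ M ^ (1 / p) * N ^ (3 - 3 / p) * T⁻¹ := by
  calc I ^ (1 / p) ≤ (M * N ^ (3 * p - 3) * T ^ (-p)) ^ (1 / p) := by gcongr
    _ = M ^ (1 / p) * N ^ (3 - 3 / p) * T⁻¹ := by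
        rw [mul_rpow (by positivity) (by positivity), mul_rpow hM (by positivity),
          ← rpow_mul hN, ← rpow_mul hT.le, ← rpow_neg_one]
        congr 3 <;> field_simp

theorem stmt4_general (C : ℝ) (p : ℝ) (hp1 : 1 ≤ p) :
    ∃ C' : ℝ, ∀ P : ℝ → ℝ → ℝ,
      (∀ N r : ℝ, 1 ≤ N → 0 ≤ r →
        |P N r| ≤ C * N ^ 3 * ((1 + N * r) ^ 5)⁻¹ * Real.exp (-4 * r)) →
      ∀ N R : ℝ, 1 ≤ N → 0 ≤ R →
        (∫ r in Set.Ici (R / N), |P N r| ^ p * Real.sinh r ^ 2) ^ (1 / p)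
          ≤ C' * N ^ (3 - 3 / p) * (1 + R)⁻¹ := by
  refine ⟨(|C| ^ p / (5 * p - 3)) ^ (1 / p), fun P hP N R hN hR ↦ ?_⟩
  have hN0 : 0 < N := by linarith
  have hI := setIntegral_Ici_abs_rpow_mul_sinh_sq_le hN0 hR (by linarith : 3 / 4 ≤ p)
    fun r hr ↦ hP N r hN hr
  have hI0 : 0 ≤ ∫ r in Ici (R / N), |P N r| ^ p * sinh r ^ 2 :=
    setIntegral_nonneg measurableSet_Ici fun _ _ ↦ by positivity
  exact rpow_one_div_le_of_le_mul_rpow hI0 (div_nonneg (by positivity) (by linarith)) hN0.le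
    (by linarith) (by linarith) hI

/-- If a radial kernel on `H³` satisfies `|P_N(r)| ≤ C N³ (1+Nr)^{-5} e^{-4r}`, then
for `R ≥ 0`, `N ≥ 1`, `p ∈ [1,2]`, the quantity
`A_{N,R,p} = (∫_{r ≥ R/N} |P_N(r)|^p (sinh r)² dr)^{1/p}` is at most
`C' N^{3-3/p} (1+R)^{-1}`, with `C'` depending only on `C` and `p`. -/
theorem stmt4 (C : ℝ) (p : ℝ) (hp1 : 1 ≤ p) (hp2 : p ≤ 2) :
    ∃ C' : ℝ, ∀ P : ℝ → ℝ → ℝ,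
      (∀ N r : ℝ, 1 ≤ N → 0 ≤ r →
        |P N r| ≤ C * N ^ 3 * ((1 + N * r) ^ 5)⁻¹ * Real.exp (-4 * r)) →
      ∀ N R : ℝ, 1 ≤ N → 0 ≤ R →
        (∫ r in Set.Ici (R / N), |P N r| ^ p * Real.sinh r ^ 2) ^ (1 / p)
          ≤ C' * N ^ (3 - 3 / p) * (1 + R)⁻¹ :=
  stmt4_general C p hp1
end

section
/- Let ã'(y) = (y^2 − 1 + N^{-2})^{-1/2} for N ≥ 1 and a(x) = ã(cosh r), r = d(0,x), on H^3. For any tangent vector X at a point with radial coordinate r, the Hessian satisfies X^α X^β D_α D_β a ≥ N^{-2} cosh r ((cosh r)^2 − 1 + N^{-2})^{-3/2} |X|^2. In particular the Hessian of a is positive definite, and X^α X_α · N 1_{B(0, 1/N)} ≤ C X^α X^β D_α D_β a for an absolute constant C. -/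
/-!
By Cauchy–Schwarz, `(X · ∇cosh r)² ≤ |X|² (cosh² r - 1)`, and since
`D^{-1/2} = D · D^{-3/2}` for `D = cosh² r - 1 + N⁻²`, the negative term of the Hessian is
absorbed by the positive one up to `N⁻² cosh r D^{-3/2} |X|²`. On `B(0, 1/N)` we have
`cosh² r - 1 ≤ 2r² ≤ 2N⁻²`, so `D ≤ (2/N)²` and `D^{-3/2} ≥ N³/8`: the lower bound is at
least `N |X|² / 8`.
-/

open Real

/-- With `c = cosh r`, `s = |∇ cosh r|² = cosh² r - 1`, `ε = N⁻²`, `X = |X|²` and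
`Y = X · ∇ cosh r`, the right-hand side is `X^α X^β D_α D_β a`. -/
theorem mul_rpow_neg_three_halves_le_hessian {c s ε X Y : ℝ} (hc : 0 ≤ c) (hsε : 0 < s + ε)
    (hY : Y ^ 2 ≤ X * s) :
    ε * c * (s + ε) ^ (-(3 : ℝ) / 2) * X
      ≤ c * (s + ε) ^ (-(1 : ℝ) / 2) * X + (-c * (s + ε) ^ (-(3 : ℝ) / 2)) * Y ^ 2 := by
  have hsplit : (s + ε) ^ (-(1 : ℝ) / 2) = (s + ε) * (s + ε) ^ (-(3 : ℝ) / 2) := by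
    rw [show -(1 : ℝ) / 2 = 1 + -(3 : ℝ) / 2 by norm_num, rpow_add hsε, rpow_one]
  have hgap : 0 ≤ c * (s + ε) ^ (-(3 : ℝ) / 2) * (X * s - Y ^ 2) := by
    have := (rpow_pos_of_pos hsε (-(3 : ℝ) / 2)).le
    have := sub_nonneg.2 hY
    positivity
  rw [hsplit]
  linarith

theorem cosh_sq_sub_one_le {r : ℝ} (hr : r ^ 2 ≤ 1) : cosh r ^ 2 - 1 ≤ 2 * r ^ 2 := by
  have hcosh : cosh r ^ 2 ≤ exp (r ^ 2) := by
    calc cosh r ^ 2 ≤ exp (r ^ 2 / 2) ^ 2 := by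
          gcongr
          exact cosh_le_exp_half_sq r
      _ = exp (r ^ 2) := by rw [← exp_nat_mul]; ring_nf
  have hexp := exp_le_two_add_div_two_sub (sq_nonneg r) (by linarith)
  rw [le_div_iff₀ (by linarith)] at hexp
  nlinarith [sq_nonneg r]

theorem cosh_sq_sub_one_add_pos (r : ℝ) {ε : ℝ} (hε : 0 < ε) : 0 < cosh r ^ 2 - 1 + ε := by
  linarith [one_le_pow₀ (n := 2) (one_le_cosh r)]

theorem inv_pow_three_le_rpow_neg_three_halves {D a : ℝ} (hD : 0 < D) (ha : 0 ≤ a)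
    (hDa : D ≤ a ^ 2) : (a ^ 3)⁻¹ ≤ D ^ (-(3 : ℝ) / 2) := by
  calc (a ^ 3)⁻¹ = (a ^ 2) ^ (-(3 : ℝ) / 2) := by
        rw [← rpow_natCast a 2, ← rpow_mul ha, show (2 : ℕ) * (-(3 : ℝ) / 2) = -3 by norm_num,
          rpow_neg ha]
        norm_cast
    _ ≤ D ^ (-(3 : ℝ) / 2) := rpow_le_rpow_of_nonpos hD hDa (by norm_num)

theorem div_eight_le_inv_sq_mul_cosh_mul_rpow {N r : ℝ} (hN : 1 ≤ N) (hr : 0 ≤ r)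
    (hrN : r < 1 / N) :
    N / 8 ≤ (N⁻¹) ^ 2 * cosh r * (cosh r ^ 2 - 1 + (N⁻¹) ^ 2) ^ (-(3 : ℝ) / 2) := by
  have hN0 : 0 < N := by linarith
  have hrε : r ^ 2 ≤ (N⁻¹) ^ 2 := by
    rw [one_div] at hrN
    exact pow_le_pow_left₀ hr hrN.le 2
  have hε1 : (N⁻¹) ^ 2 ≤ 1 := pow_le_one₀ (by positivity) (inv_le_one_of_one_le₀ hN)
  have hD := cosh_sq_sub_one_add_pos r (ε := (N⁻¹) ^ 2) (by positivity)
  have hD4 : cosh r ^ 2 - 1 + (N⁻¹) ^ 2 ≤ (2 * N⁻¹) ^ 2 := by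
    nlinarith [cosh_sq_sub_one_le (hrε.trans hε1)]
  have hrpow := inv_pow_three_le_rpow_neg_three_halves hD (by positivity) hD4
  calc N / 8 = (N⁻¹) ^ 2 * 1 * ((2 * N⁻¹) ^ 3)⁻¹ := by field_simp; ring
    _ ≤ _ := by gcongr; exact one_le_cosh r

/-- Hessian bound for `a = ã(cosh r)` on `H³` with `ã'(y) = (y²-1+N⁻²)^{-1/2}`
(so `ã''(y) = -y (y²-1+N⁻²)^{-3/2}`).  In an orthonormal frame,
`X^α X^β D_α D_β a = cosh r ã'(cosh r) |X|² + ã''(cosh r) (X·∇cosh r)²` with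
`|∇cosh r|² = cosh²r - 1` (so `(X·∇cosh r)² ≤ |X|² (cosh²r - 1)` by Cauchy–Schwarz).
The Hessian is bounded below by `N⁻² cosh r (cosh²r - 1 + N⁻²)^{-3/2} |X|²`, so it is
positive definite, and `N |X|² 1_{B(0,1/N)} ≤ C X^α X^β D_α D_β a` for an absolute
constant `C`. -/
theorem stmt9 :
    ∃ C : ℝ, 0 < C ∧ ∀ N : ℝ, 1 ≤ N → ∀ r : ℝ, 0 ≤ r →
      ∀ XnormSq Xdot : ℝ, 0 ≤ XnormSq →
        Xdot ^ 2 ≤ XnormSq * (Real.cosh r ^ 2 - 1) →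
        ((N⁻¹) ^ 2 * Real.cosh r *
              ((Real.cosh r ^ 2 - 1 + (N⁻¹) ^ 2) ^ (-(3 : ℝ) / 2)) * XnormSq
            ≤ Real.cosh r * ((Real.cosh r ^ 2 - 1 + (N⁻¹) ^ 2) ^ (-(1 : ℝ) / 2)) * XnormSq
              + (-(Real.cosh r) * ((Real.cosh r ^ 2 - 1 + (N⁻¹) ^ 2) ^ (-(3 : ℝ) / 2)))
                * Xdot ^ 2) ∧
        ((if r < 1 / N then N * XnormSq else 0)
            ≤ C * (Real.cosh r * ((Real.cosh r ^ 2 - 1 + (N⁻¹) ^ 2) ^ (-(1 : ℝ) / 2))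
                * XnormSq
              + (-(Real.cosh r) * ((Real.cosh r ^ 2 - 1 + (N⁻¹) ^ 2) ^ (-(3 : ℝ) / 2)))
                * Xdot ^ 2)) := by
  refine ⟨8, by norm_num, fun N hN r hr XnormSq Xdot hX hXdot => ?_⟩
  have hD := cosh_sq_sub_one_add_pos r (ε := (N⁻¹) ^ 2) (by positivity)
  have hess := mul_rpow_neg_three_halves_le_hessian (cosh_pos r).le hD hXdot
  refine ⟨hess, ?_⟩
  set lower := (N⁻¹) ^ 2 * cosh r * (cosh r ^ 2 - 1 + (N⁻¹) ^ 2) ^ (-(3 : ℝ) / 2)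
  split_ifs with hrN
  · have hN8 : N / 8 ≤ lower := div_eight_le_inv_sq_mul_cosh_mul_rpow hN hr hrN
    calc N * XnormSq = 8 * (N / 8 * XnormSq) := by ring
      _ ≤ 8 * (lower * XnormSq) := by gcongr
      _ ≤ _ := by gcongr
  · have := (cosh_pos r).le
    have hlower : 0 ≤ lower := by positivity
    nlinarith
end

section
/- Let E^1(u) = (1/2)∫_{H^3}|∇_g u|^2 dμ + (1/6)∫_{H^3}|u|^6 dμ. Suppose f_k = Σ_{α=1}^{J} F^α_k + r^J_k in H^1(H^3) where (a) the gradient terms satisfy ‖∇_g f_k‖^2_{L^2} = Σ_α ‖∇_g F^α_k‖^2_{L^2} + ‖∇_g r^J_k‖^2_{L^2} + o_k(1), (b) ‖F^α_k F^β_k‖_{L^3} → 0 as k → ∞ for all α ≠ β, (c) the F^α_k are bounded in L^6 uniformly, and (d) ‖r^J_k‖_{L^6} → 0 as k → ∞. Then |E^1(f_k) − Σ_{α=1}^J E^1(F^α_k) − E^1(r^J_k)| → 0 as k → ∞. -/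
/-!
Put the remainder `r` next to the profiles as one more summand. For any finite family,
`|‖∑ aᵢ‖⁶ - ∑ ‖aᵢ‖⁶| ≤ C ∑_{i ≠ j} ‖aᵢ‖ ‖aⱼ‖⁵` pointwise (induction on the family from the
two-term case), and Hölder gives `∫ ‖aᵢ‖ ‖aⱼ‖⁵ ≤ ‖aᵢ aⱼ‖_{L³} ‖aⱼ‖⁴_{L⁶}`. So the sextic parts
of the energy decouple as soon as all cross products vanish in `L³` and all summands stay bounded
in `L⁶`. For two profiles this is hypothesis (b); for a profile and the remainder it follows from
Cauchy–Schwarz, `‖F r‖_{L³} ≤ ‖F‖_{L⁶} ‖r‖_{L⁶} → 0`. The gradient parts decouple by (a).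
-/

open MeasureTheory Real Filter

noncomputable section

/-- Minkowski bilinear form on `ℝ⁴`, `[x,y] = x⁰y⁰ - x¹y¹ - x²y² - x³y³`. -/
def Mink (x y : Fin 4 → ℝ) : ℝ :=
  x 0 * y 0 - x 1 * y 1 - x 2 * y 2 - x 3 * y 3

/-- The hyperboloid model of hyperbolic 3-space. -/
def Hyp3 : Type := {x : Fin 4 → ℝ // Mink x x = 1 ∧ 0 < x 0}

/-- Inverse hyperbolic cosine. -/
def arcosh (x : ℝ) : ℝ := Real.log (x + Real.sqrt (x ^ 2 - 1))

/-- The global chart `Ψ_I(v) = (√(1+|v|²), v)` of `H³`, as a map into `ℝ⁴`. -/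
def psiI (v : EuclideanSpace ℝ (Fin 3)) : Fin 4 → ℝ :=
  ![Real.sqrt (1 + ‖v‖ ^ 2), v 0, v 1, v 2]

lemma psiI_mem (v : EuclideanSpace ℝ (Fin 3)) :
    Mink (psiI v) (psiI v) = 1 ∧ 0 < psiI v 0 := by
  have h : Real.sqrt (1 + ‖v‖ ^ 2) ^ 2 = 1 + ‖v‖ ^ 2 := Real.sq_sqrt (by positivity)
  have hn : ‖v‖ ^ 2 = v 0 ^ 2 + v 1 ^ 2 + v 2 ^ 2 := by
    rw [EuclideanSpace.norm_eq, Real.sq_sqrt (by positivity)]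
    simp [Fin.sum_univ_three, sq_abs]
  constructor
  · simp only [Mink, psiI, Matrix.cons_val_zero, Matrix.cons_val_one, Matrix.head_cons,
      Matrix.cons_val_two, Matrix.tail_cons, Matrix.cons_val_three]
    nlinarith [h, hn]
  · simp only [psiI, Matrix.cons_val_zero]
    positivity

/-- The chart `Ψ_I` as a map into `H³`. -/
def psiH (v : EuclideanSpace ℝ (Fin 3)) : Hyp3 := ⟨psiI v, psiI_mem v⟩

/-- The origin `0 = (1,0,0,0)` of `H³`. -/
def originH : Hyp3 :=
  ⟨![1, 0, 0, 0], by
    constructor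
    · simp [Mink]
    · norm_num⟩

open Finset

theorem Finset.sum_offDiag_insert {ι M : Type*} [DecidableEq ι] [AddCommMonoid M]
    {s : Finset ι} {i : ι} (hi : i ∉ s) (f : ι × ι → M) :
    ∑ p ∈ (insert i s).offDiag, f p = ∑ p ∈ s.offDiag, f p + ∑ j ∈ s, (f (i, j) + f (j, i)) := by
  rw [offDiag_insert hi, sum_union, sum_union, sum_add_distrib, singleton_product,
    product_singleton, sum_map, sum_map, add_assoc]
  · rfl
  all_goals
    rw [disjoint_left]
    aesop

-- `62 = ∑_{0<k<6} (6 choose k)`, and every mixed monomial `xᵏ y⁶⁻ᵏ` is at most `x⁵ y + x y⁵`.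
theorem abs_pow_six_sub_pow_six_sub_pow_six_le {x y z : ℝ} (hx : 0 ≤ x) (hy : 0 ≤ y)
    (hzxy : z ≤ x + y) (hxyz : |x - y| ≤ z) :
    |z ^ 6 - x ^ 6 - y ^ 6| ≤ 62 * (x ^ 5 * y + x * y ^ 5) := by
  have hupper : z ^ 6 ≤ (x + y) ^ 6 := pow_le_pow_left₀ ((abs_nonneg _).trans hxyz) hzxy 6
  have hlower : (x - y) ^ 6 ≤ z ^ 6 := by
    simpa only [Even.pow_abs ⟨3, rfl⟩] using pow_le_pow_left₀ (abs_nonneg _) hxyz 6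
  have hxy := mul_nonneg hx hy
  rw [abs_le]
  constructor
  · nlinarith [sq_nonneg (x - y), mul_nonneg hxy (sq_nonneg (x - y)),
      mul_nonneg hxy (sq_nonneg (x + y)), mul_nonneg (mul_nonneg hxy hxy) (sq_nonneg (x - y))]
  · nlinarith [sq_nonneg (x - y), mul_nonneg hxy (sq_nonneg (x - y)),
      mul_nonneg hxy (sq_nonneg (x + y)), mul_nonneg (mul_nonneg hxy hxy) (sq_nonneg (x - y))]

section Pointwise

variable {E : Type*} [SeminormedAddCommGroup E]

theorem abs_norm_add_pow_six_sub_le (a b : E) :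
    |‖a + b‖ ^ 6 - ‖a‖ ^ 6 - ‖b‖ ^ 6| ≤ 62 * (‖a‖ ^ 5 * ‖b‖ + ‖a‖ * ‖b‖ ^ 5) :=
  abs_pow_six_sub_pow_six_sub_pow_six_le (norm_nonneg a) (norm_nonneg b) (norm_add_le a b)
    (by simpa using abs_norm_sub_norm_le a (-b))

theorem exists_abs_norm_sum_pow_six_sub_le {ι : Type*} [DecidableEq ι] (s : Finset ι) :
    ∃ C, 0 ≤ C ∧ ∀ a : ι → E,
      |‖∑ i ∈ s, a i‖ ^ 6 - ∑ i ∈ s, ‖a i‖ ^ 6| ≤ C * ∑ p ∈ s.offDiag, ‖a p.1‖ * ‖a p.2‖ ^ 5 := by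
  induction s using Finset.induction_on with
  | empty => exact ⟨0, le_rfl, fun a => by simp⟩
  | @insert i s hi ih =>
    obtain ⟨C, hC, hCa⟩ := ih
    refine ⟨62 * (1 + #s ^ 4) + C, by positivity, fun a => ?_⟩
    set b := ∑ j ∈ s, a j
    set x := ‖a i‖
    set P := ∑ p ∈ s.offDiag, ‖a p.1‖ * ‖a p.2‖ ^ 5
    set Q := ∑ j ∈ s, x * ‖a j‖ ^ 5
    set R := ∑ j ∈ s, ‖a j‖ * x ^ 5
    have hP : 0 ≤ P := sum_nonneg fun _ _ => by positivity
    have hQ : 0 ≤ Q := sum_nonneg fun _ _ => by positivity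
    have hR : 0 ≤ R := sum_nonneg fun _ _ => by positivity
    have hbR : x ^ 5 * ‖b‖ ≤ R :=
      (mul_le_mul_of_nonneg_left (norm_sum_le _ _) (by positivity)).trans_eq
        (by rw [mul_sum]; exact sum_congr rfl fun _ _ => mul_comm _ _)
    have hbQ : x * ‖b‖ ^ 5 ≤ #s ^ 4 * Q :=
      (mul_le_mul_of_nonneg_left ((pow_le_pow_left₀ (norm_nonneg _) (norm_sum_le _ _) 5).trans
        (pow_sum_le_card_mul_sum_pow (fun _ _ => norm_nonneg _) 4)) (norm_nonneg _)).trans_eq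
        (by rw [mul_left_comm, mul_sum])
    rw [sum_insert hi, sum_insert hi, sum_offDiag_insert hi, sum_add_distrib]
    calc |‖a i + b‖ ^ 6 - (x ^ 6 + ∑ j ∈ s, ‖a j‖ ^ 6)|
        ≤ |‖a i + b‖ ^ 6 - x ^ 6 - ‖b‖ ^ 6| + |‖b‖ ^ 6 - ∑ j ∈ s, ‖a j‖ ^ 6| := by
          refine le_of_eq_of_le ?_ (abs_add_le _ _)
          ring_nf
      _ ≤ 62 * (R + #s ^ 4 * Q) + C * P := by
          gcongr
          · exact (abs_norm_add_pow_six_sub_le (a i) b).trans (by gcongr)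
          · exact hCa a
      _ ≤ (62 * (1 + #s ^ 4) + C) * (P + (Q + R)) := by
          have hn : (0 : ℝ) ≤ #s ^ 4 := by positivity
          nlinarith [mul_nonneg hC hQ, mul_nonneg hC hR, mul_nonneg hn hP, mul_nonneg hn hR]

end Pointwise

section Integral

variable {α E : Type*} [MeasurableSpace α] {μ : Measure α} [NormedAddCommGroup E] {f g : α → E}

theorem MeasureTheory.MemLp.norm_pow_div {p : ENNReal} (hf : MemLp f p μ) (n : ℕ) :
    MemLp (fun x => ‖f x‖ ^ n) (p / n) μ := by
  simpa using hf.norm_rpow_div n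

theorem Real.pow_rpow_eq_pow_of_mul_eq {x : ℝ} (hx : 0 ≤ x) (m n : ℕ) {p : ℝ} (hp : m * p = n) :
    (x ^ m) ^ p = x ^ n := by
  rw [← Real.rpow_natCast_mul hx, hp, Real.rpow_natCast]

theorem integral_norm_mul_norm_pow_three_le (hf : MemLp f 6 μ) (hg : MemLp g 6 μ) :
    ∫ x, (‖f x‖ * ‖g x‖) ^ 3 ∂μ ≤
      (∫ x, ‖f x‖ ^ 6 ∂μ) ^ (1 / 2 : ℝ) * (∫ x, ‖g x‖ ^ 6 ∂μ) ^ (1 / 2 : ℝ) := by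
  have hexp : ENNReal.ofReal 2 = 6 / (3 : ℕ) := by
    rw [ENNReal.eq_div_iff (by norm_num) (by norm_num)]; norm_num
  have h := integral_mul_le_Lp_mul_Lq_of_nonneg Real.HolderConjugate.two_two
    (f := fun x => ‖f x‖ ^ 3) (g := fun x => ‖g x‖ ^ 3)
    (ae_of_all _ fun _ => by positivity) (ae_of_all _ fun _ => by positivity)
    (hexp ▸ hf.norm_pow_div 3) (hexp ▸ hg.norm_pow_div 3)
  simp only [Real.pow_rpow_eq_pow_of_mul_eq (norm_nonneg _) 3 6 (p := 2) (by norm_num)] at h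
  simpa only [mul_pow] using h

theorem integral_norm_mul_norm_pow_five_le (hf : MemLp f 6 μ) (hg : MemLp g 6 μ) :
    ∫ x, ‖f x‖ * ‖g x‖ ^ 5 ∂μ ≤
      (∫ x, (‖f x‖ * ‖g x‖) ^ 3 ∂μ) ^ (1 / 3 : ℝ) * (∫ x, ‖g x‖ ^ 6 ∂μ) ^ (2 / 3 : ℝ) := by
  have : ENNReal.HolderTriple 6 6 3 := ⟨by
    rw [← ENNReal.toReal_eq_toReal_iff' (by simp) (by simp), ENNReal.toReal_add (by simp) (by simp)]
    norm_num⟩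
  have hexp : ENNReal.ofReal (3 / 2) = 6 / (4 : ℕ) := by
    rw [ENNReal.eq_div_iff (by norm_num) (by norm_num), Nat.cast_ofNat, ← ENNReal.ofReal_ofNat 4,
      ← ENNReal.ofReal_mul (by norm_num)]
    norm_num
  have h := integral_mul_le_Lp_mul_Lq_of_nonneg (p := 3) (q := 3 / 2)
    ⟨by norm_num, by norm_num, by norm_num⟩ (f := fun x => ‖f x‖ * ‖g x‖) (g := fun x => ‖g x‖ ^ 4)
    (ae_of_all _ fun _ => by positivity) (ae_of_all _ fun _ => by positivity)
    (by simpa using hg.norm.mul' hf.norm) (hexp ▸ hg.norm_pow_div 4)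
  simp only [Real.pow_rpow_eq_pow_of_mul_eq (norm_nonneg _) 4 6 (p := 3 / 2) (by norm_num)] at h
  rw [show (1 : ℝ) / (3 / 2) = 2 / 3 by norm_num] at h
  simpa only [Real.rpow_ofNat, mul_assoc, ← pow_succ'] using h

theorem integrable_norm_mul_norm_pow_five (hf : MemLp f 6 μ) (hg : MemLp g 6 μ) :
    Integrable (fun x => ‖f x‖ * ‖g x‖ ^ 5) μ := by
  refine ((hf.integrable_norm_pow (p := 6) (by norm_num)).add
    (hg.integrable_norm_pow (p := 6) (by norm_num))).mono' (hf.1.norm.mul (hg.1.norm.pow 5))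
    (ae_of_all _ fun x => ?_)
  have hfx := norm_nonneg (f x)
  have hgx := norm_nonneg (g x)
  rw [Real.norm_of_nonneg (by positivity), Pi.add_apply]
  rcases le_total ‖f x‖ ‖g x‖ with h | h
  · calc ‖f x‖ * ‖g x‖ ^ 5 ≤ ‖g x‖ * ‖g x‖ ^ 5 := by gcongr
      _ ≤ _ := by linarith [pow_nonneg hfx 6]
  · calc ‖f x‖ * ‖g x‖ ^ 5 ≤ ‖f x‖ * ‖f x‖ ^ 5 := by gcongr
      _ ≤ _ := by linarith [pow_nonneg hgx 6]

theorem exists_abs_integral_norm_sum_pow_six_sub_le (ι : Type*) [Fintype ι] [DecidableEq ι] :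
    ∃ C, 0 ≤ C ∧ ∀ G : ι → α → E, (∀ i, MemLp (G i) 6 μ) →
      |∫ x, ‖∑ i, G i x‖ ^ 6 ∂μ - ∑ i, ∫ x, ‖G i x‖ ^ 6 ∂μ| ≤
        C * ∑ p ∈ univ.offDiag, ∫ x, ‖G p.1 x‖ * ‖G p.2 x‖ ^ 5 ∂μ := by
  obtain ⟨C, hC, hCa⟩ := exists_abs_norm_sum_pow_six_sub_le (E := E) (univ : Finset ι)
  refine ⟨C, hC, fun G hG => ?_⟩
  have hint : ∀ i ∈ univ, Integrable (fun x => ‖G i x‖ ^ 6) μ :=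
    fun i _ => (hG i).integrable_norm_pow (p := 6) (by norm_num)
  have hsum : Integrable (fun x => ‖∑ i, G i x‖ ^ 6) μ :=
    (memLp_finsetSum _ fun i _ => hG i).integrable_norm_pow (p := 6) (by norm_num)
  have hpairs : Integrable (fun x => ∑ p ∈ univ.offDiag, ‖G p.1 x‖ * ‖G p.2 x‖ ^ 5) μ :=
    integrable_finsetSum _ fun p _ => integrable_norm_mul_norm_pow_five (hG p.1) (hG p.2)
  rw [← integral_finsetSum _ hint, ← integral_sub hsum (integrable_finsetSum _ hint),
    ← integral_finsetSum _ fun p _ => integrable_norm_mul_norm_pow_five (hG p.1) (hG p.2),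
    ← integral_const_mul]
  exact abs_integral_le_integral_abs.trans <| integral_mono_of_nonneg
    (ae_of_all _ fun _ => abs_nonneg _) (hpairs.const_mul C) (ae_of_all _ fun x => hCa (G · x))

theorem tendsto_integral_norm_sum_pow_six_sub {ι : Type*} [Fintype ι] {G : ι → ℕ → α → E}
    (hG : ∀ i k, MemLp (G i k) 6 μ) (hbdd : ∃ M, ∀ i k, ∫ x, ‖G i k x‖ ^ 6 ∂μ ≤ M)
    (hpair : ∀ i j, i ≠ j →
      Tendsto (fun k => ∫ x, (‖G i k x‖ * ‖G j k x‖) ^ 3 ∂μ) atTop (nhds 0)) :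
    Tendsto (fun k => ∫ x, ‖∑ i, G i k x‖ ^ 6 ∂μ - ∑ i, ∫ x, ‖G i k x‖ ^ 6 ∂μ) atTop (nhds 0) := by
  classical
  obtain ⟨M, hM⟩ := hbdd
  obtain ⟨C, hC, hCG⟩ := exists_abs_integral_norm_sum_pow_six_sub_le (μ := μ) (E := E) ι
  have hbound : ∀ k, |∫ x, ‖∑ i, G i k x‖ ^ 6 ∂μ - ∑ i, ∫ x, ‖G i k x‖ ^ 6 ∂μ| ≤
      C * ∑ p ∈ univ.offDiag, (∫ x, (‖G p.1 k x‖ * ‖G p.2 k x‖) ^ 3 ∂μ) ^ (1 / 3 : ℝ) *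
        M ^ (2 / 3 : ℝ) := fun k => by
    refine (hCG (fun i => G i k) fun i => hG i k).trans ?_
    gcongr with p
    refine (integral_norm_mul_norm_pow_five_le (hG p.1 k) (hG p.2 k)).trans ?_
    gcongr
    exact hM p.2 k
  refine squeeze_zero_norm hbound ?_
  have hlim : ∀ p ∈ univ.offDiag, Tendsto (fun k =>
      (∫ x, (‖G p.1 k x‖ * ‖G p.2 k x‖) ^ 3 ∂μ) ^ (1 / 3 : ℝ) * M ^ (2 / 3 : ℝ)) atTop (nhds 0) :=
    fun p hp => by
      simpa using ((hpair p.1 p.2 (mem_offDiag.1 hp).2.2).rpow_const (p := 1 / 3)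
        (Or.inr (by norm_num))).mul_const (M ^ (2 / 3 : ℝ))
  simpa using (tendsto_finsetSum _ hlim).const_mul C

theorem tendsto_integral_norm_mul_norm_pow_three_of_tendsto {f g : ℕ → α → E}
    (hf : ∀ k, MemLp (f k) 6 μ) (hg : ∀ k, MemLp (g k) 6 μ)
    (hf0 : Tendsto (fun k => ∫ x, ‖f k x‖ ^ 6 ∂μ) atTop (nhds 0))
    (hgM : ∃ M, ∀ k, ∫ x, ‖g k x‖ ^ 6 ∂μ ≤ M) :
    Tendsto (fun k => ∫ x, (‖f k x‖ * ‖g k x‖) ^ 3 ∂μ) atTop (nhds 0) := by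
  obtain ⟨M, hM⟩ := hgM
  have hbound : ∀ k, ∫ x, (‖f k x‖ * ‖g k x‖) ^ 3 ∂μ ≤
      (∫ x, ‖f k x‖ ^ 6 ∂μ) ^ (1 / 2 : ℝ) * M ^ (1 / 2 : ℝ) := fun k => by
    refine (integral_norm_mul_norm_pow_three_le (hf k) (hg k)).trans ?_
    gcongr
    exact hM k
  refine squeeze_zero (fun k => integral_nonneg fun _ => by positivity) hbound ?_
  simpa using (hf0.rpow_const (p := 1 / 2) (Or.inr (by norm_num))).mul_const (M ^ (1 / 2 : ℝ))

theorem tendsto_integral_norm_sum_add_pow_six_sub {ι : Type*} [Fintype ι] {F : ι → ℕ → α → E}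
    {r : ℕ → α → E} (hF : ∀ i k, MemLp (F i k) 6 μ) (hr : ∀ k, MemLp (r k) 6 μ)
    (hpair : ∀ i j, i ≠ j →
      Tendsto (fun k => ∫ x, (‖F i k x‖ * ‖F j k x‖) ^ 3 ∂μ) atTop (nhds 0))
    (hbdd : ∃ M, ∀ i k, ∫ x, ‖F i k x‖ ^ 6 ∂μ ≤ M)
    (hr0 : Tendsto (fun k => ∫ x, ‖r k x‖ ^ 6 ∂μ) atTop (nhds 0)) :
    Tendsto (fun k => ∫ x, ‖∑ i, F i k x + r k x‖ ^ 6 ∂μ - ∑ i, ∫ x, ‖F i k x‖ ^ 6 ∂μ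
      - ∫ x, ‖r k x‖ ^ 6 ∂μ) atTop (nhds 0) := by
  obtain ⟨M, hM⟩ := hbdd
  obtain ⟨Mr, hMr⟩ := hr0.bddAbove_range
  let G : Option ι → ℕ → α → E := fun o => o.elim r F
  have hG : ∀ o k, MemLp (G o k) 6 μ := by
    rintro (_ | i) k
    exacts [hr k, hF i k]
  have hGbdd : ∃ M', ∀ o k, ∫ x, ‖G o k x‖ ^ 6 ∂μ ≤ M' := by
    refine ⟨max Mr M, ?_⟩
    rintro (_ | i) k
    exacts [le_max_of_le_left (hMr ⟨k, rfl⟩), le_max_of_le_right (hM i k)]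
  have hGpair : ∀ o o', o ≠ o' →
      Tendsto (fun k => ∫ x, (‖G o k x‖ * ‖G o' k x‖) ^ 3 ∂μ) atTop (nhds 0) := by
    rintro (_ | i) (_ | j) hne
    · exact absurd rfl hne
    · exact tendsto_integral_norm_mul_norm_pow_three_of_tendsto hr (hF j) hr0 ⟨M, hM j⟩
    · simpa only [G, Option.elim, mul_comm] using
        tendsto_integral_norm_mul_norm_pow_three_of_tendsto hr (hF i) hr0 ⟨M, hM i⟩
    · exact hpair i j (Option.some_injective _ |>.ne_iff.mp hne)
  simpa only [Fintype.sum_option, G, Option.elim, add_comm, sub_sub]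
    using tendsto_integral_norm_sum_pow_six_sub hG hGbdd hGpair

end Integral

/-- `Gf k`, `GF j k` and `Gr k` stand for `‖∇_g f_k‖²_{L²}`, `‖∇_g F^j_k‖²_{L²}` and
`‖∇_g r_k‖²_{L²}`. -/
theorem stmt16_general [MetricSpace Hyp3] [MeasurableSpace Hyp3] [BorelSpace Hyp3]
    (J : ℕ) (F : Fin J → ℕ → Hyp3 → ℂ) (r fseq : ℕ → Hyp3 → ℂ)
    (Gf Gr : ℕ → ℝ) (GF : Fin J → ℕ → ℝ)
    (hsum : ∀ k x, fseq k x = (∑ j : Fin J, F j k x) + r k x)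
    (hmem : ∀ j k, MeasureTheory.MemLp (F j k) 6 (μH[3] : Measure Hyp3))
    (hmemr : ∀ k, MeasureTheory.MemLp (r k) 6 (μH[3] : Measure Hyp3))
    (ha : Filter.Tendsto (fun k => Gf k - (∑ j : Fin J, GF j k) - Gr k)
      Filter.atTop (nhds 0))
    (hb : ∀ j j' : Fin J, j ≠ j' →
      Filter.Tendsto (fun k => ∫ x, ‖F j k x * F j' k x‖ ^ 3 ∂(μH[3] : Measure Hyp3))
        Filter.atTop (nhds 0))
    (hc : ∃ M : ℝ, ∀ j k, ∫ x, ‖F j k x‖ ^ 6 ∂(μH[3] : Measure Hyp3) ≤ M)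
    (hd : Filter.Tendsto (fun k => ∫ x, ‖r k x‖ ^ 6 ∂(μH[3] : Measure Hyp3))
      Filter.atTop (nhds 0)) :
    Filter.Tendsto
      (fun k =>
        |((1 / 2 : ℝ) * Gf k + (1 / 6) * ∫ x, ‖fseq k x‖ ^ 6 ∂(μH[3] : Measure Hyp3))
          - (∑ j : Fin J,
              ((1 / 2 : ℝ) * GF j k + (1 / 6) * ∫ x, ‖F j k x‖ ^ 6 ∂(μH[3] : Measure Hyp3)))
          - ((1 / 2 : ℝ) * Gr k + (1 / 6) * ∫ x, ‖r k x‖ ^ 6 ∂(μH[3] : Measure Hyp3))|)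
      Filter.atTop (nhds 0) := by
  have hsix := tendsto_integral_norm_sum_add_pow_six_sub hmem hmemr
    (fun j j' hj => by simpa only [norm_mul] using hb j j' hj) hc hd
  have hlin := ((ha.const_mul (1 / 2)).add (hsix.const_mul (1 / 6))).abs
  rw [mul_zero, mul_zero, add_zero, abs_zero] at hlin
  refine hlin.congr fun k => ?_
  simp only [hsum, sum_add_distrib, ← mul_sum]
  congr 1
  ring

/-- Decoupling of the energy `E¹(u) = ½∫|∇_g u|² + (1/6)∫|u|⁶` along a profile
decomposition `f_k = Σ_{α≤J} F^α_k + r^J_k` on `H³`.  The gradient parts are recorded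
by the numbers `Gf k = ‖∇_g f_k‖²_{L²}`, `GF α k = ‖∇_g F^α_k‖²_{L²}`,
`Gr k = ‖∇_g r^J_k‖²_{L²}`, which satisfy the Pythagorean hypothesis (a); (b) the
profiles pairwise decouple in `L³`; (c) they are uniformly bounded in `L⁶`; (d) the
remainder vanishes in `L⁶`.  Then `|E¹(f_k) - Σ_α E¹(F^α_k) - E¹(r^J_k)| → 0`. -/
theorem stmt16 [MetricSpace Hyp3] [MeasurableSpace Hyp3] [BorelSpace Hyp3]
    (hdist : ∀ x y : Hyp3, dist x y = _root_.arcosh (Mink x.1 y.1))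
    (J : ℕ) (F : Fin J → ℕ → Hyp3 → ℂ) (r fseq : ℕ → Hyp3 → ℂ)
    (Gf Gr : ℕ → ℝ) (GF : Fin J → ℕ → ℝ)
    (hGf : ∀ k, 0 ≤ Gf k) (hGF : ∀ j k, 0 ≤ GF j k) (hGr : ∀ k, 0 ≤ Gr k)
    (hsum : ∀ k x, fseq k x = (∑ j : Fin J, F j k x) + r k x)
    (hmem : ∀ j k, MeasureTheory.MemLp (F j k) 6 (μH[3] : Measure Hyp3))
    (hmemr : ∀ k, MeasureTheory.MemLp (r k) 6 (μH[3] : Measure Hyp3))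
    (ha : Filter.Tendsto (fun k => Gf k - (∑ j : Fin J, GF j k) - Gr k)
      Filter.atTop (nhds 0))
    (hb : ∀ j j' : Fin J, j ≠ j' →
      Filter.Tendsto (fun k => ∫ x, ‖F j k x * F j' k x‖ ^ 3 ∂(μH[3] : Measure Hyp3))
        Filter.atTop (nhds 0))
    (hc : ∃ M : ℝ, ∀ j k, ∫ x, ‖F j k x‖ ^ 6 ∂(μH[3] : Measure Hyp3) ≤ M)
    (hd : Filter.Tendsto (fun k => ∫ x, ‖r k x‖ ^ 6 ∂(μH[3] : Measure Hyp3))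
      Filter.atTop (nhds 0)) :
    Filter.Tendsto
      (fun k =>
        |((1 / 2 : ℝ) * Gf k + (1 / 6) * ∫ x, ‖fseq k x‖ ^ 6 ∂(μH[3] : Measure Hyp3))
          - (∑ j : Fin J,
              ((1 / 2 : ℝ) * GF j k + (1 / 6) * ∫ x, ‖F j k x‖ ^ 6 ∂(μH[3] : Measure Hyp3)))
          - ((1 / 2 : ℝ) * Gr k + (1 / 6) * ∫ x, ‖r k x‖ ^ 6 ∂(μH[3] : Measure Hyp3))|)
      Filter.atTop (nhds 0) :=
  stmt16_general J F r fseq Gf Gr GF hsum hmem hmemr ha hb hc hd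

end
end
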